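/- Strong converse for c-q channel codes with constant composition (classical version): Let W : X → 𝒫(Y) be a channel on finite alphabets, P ∈ 𝒫_n(X) a type, and C = (E, D) an n-blocklength code with all codewords E(m) of type P and message set of size M. Then for every α > 1 and every σ ∈ 𝒫(Y), −(1/n)·log(1 − P_e(C)) ≥ ((1−α)/α)·[ ∑_x P(x)·D_α(W(·|x)‖σ) − (log M)/n ], where P_e(C) is the average error probability and D_α is the Rényi divergence of order α. -/

import Mathlib

/-!
For a message `m`, Hölder's inequality (the data-processing inequality for `D_α` applied to the
test `D m`) bounds its success probability by `σⁿ(D m) ^ (1 - 1/α) * Q ^ (1/α)`, where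
`Q = ∑ Wⁿ(y|E m) ^ α σⁿ(y) ^ (1 - α)`. Since `Wⁿ` and `σⁿ` are products and `E m` has type `c`,
`Q = ∏ₐ Q_α(W(·|a)‖σ) ^ c a` does not depend on `m`. Averaging over `m`, concavity of
`t ↦ t ^ (1 - 1/α)` and `∑ₘ σⁿ(D m) ≤ 1` give `1 - P_e ≤ M ^ (1/α - 1) Q ^ (1/α)`, and taking
logarithms gives the claim.
-/

open Finset Real Function

/-- `renyiSum α p q = exp ((α - 1) D_α(p‖q))`. -/
noncomputable def renyiSum {ι : Type*} [Fintype ι] (α : ℝ) (p q : ι → ℝ) : ℝ :=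
  ∑ i, p i ^ α * q i ^ (1 - α)

section RenyiSum

variable {ι : Type*} [Fintype ι] {α : ℝ} {p q : ι → ℝ}

lemma renyiSum_nonneg (hp : ∀ i, 0 ≤ p i) (hq : ∀ i, 0 ≤ q i) : 0 ≤ renyiSum α p q :=
  sum_nonneg fun i _ => by have := hp i; have := hq i; positivity

lemma renyiSum_pos (hp : ∀ i, 0 ≤ p i) (hp_sum : 0 < ∑ i, p i) (hq : ∀ i, 0 < q i) :
    0 < renyiSum α p q := by
  obtain ⟨i, -, hpi⟩ := exists_lt_of_sum_lt (by simpa using hp_sum : ∑ _i : ι, (0 : ℝ) < ∑ i, p i)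
  refine lt_of_lt_of_le (by have := hq i; positivity) <|
    single_le_sum (f := fun i => p i ^ α * q i ^ (1 - α))
      (fun j _ => by have := hp j; have := hq j; positivity) (mem_univ i)

lemma sum_le_rpow_mul_renyiSum_rpow (s : Finset ι) (hα : 1 ≤ α) (hp : ∀ i, 0 ≤ p i)
    (hq : ∀ i, 0 < q i) :
    ∑ i ∈ s, p i ≤ (∑ i ∈ s, q i) ^ (1 - α⁻¹) * renyiSum α p q ^ α⁻¹ := by
  have hratio : ∀ i, q i * (p i / q i) ^ α = p i ^ α * q i ^ (1 - α) := fun i => by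
    have := (hq i).ne'
    rw [div_rpow (hp i) (hq i).le, rpow_sub (hq i), rpow_one]
    field_simp
  calc ∑ i ∈ s, p i = ∑ i ∈ s, q i * (p i / q i) :=
        sum_congr rfl fun i _ => (mul_div_cancel₀ _ (hq i).ne').symm
    _ ≤ (∑ i ∈ s, q i) ^ (1 - α⁻¹) * (∑ i ∈ s, q i * (p i / q i) ^ α) ^ α⁻¹ :=
        inner_le_weight_mul_Lp_of_nonneg s hα _ _ (fun i => (hq i).le)
          fun i => div_nonneg (hp i) (hq i).le
    _ ≤ (∑ i ∈ s, q i) ^ (1 - α⁻¹) * renyiSum α p q ^ α⁻¹ := by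
        have hterm : ∀ i, 0 ≤ p i ^ α * q i ^ (1 - α) := fun i => by
          have := hp i; have := hq i; positivity
        simp only [hratio]
        gcongr
        · exact rpow_nonneg (sum_nonneg fun i _ => (hq i).le) _
        · exact sum_nonneg fun i _ => hterm i
        · exact sum_le_univ_sum_of_nonneg hterm

end RenyiSum

lemma renyiSum_pi {ι Y : Type*} [Fintype ι] [DecidableEq ι] [Fintype Y] (α : ℝ)
    (μ ν : ι → Y → ℝ) (hμ : ∀ i y, 0 ≤ μ i y) (hν : ∀ i y, 0 ≤ ν i y) :
    renyiSum α (fun y : ι → Y => ∏ i, μ i (y i)) (fun y => ∏ i, ν i (y i))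
      = ∏ i, renyiSum α (μ i) (ν i) := by
  simp only [renyiSum, Fintype.prod_sum, ← finsetProd_rpow _ _ (fun i _ => hμ i _),
    ← finsetProd_rpow _ _ (fun i _ => hν i _), prod_mul_distrib]

lemma prod_comp_eq_prod_pow_of_card_fiber {ι κ M : Type*} [Fintype ι] [Fintype κ]
    [DecidableEq κ] [CommMonoid M] {x : ι → κ} {c : κ → ℕ} (hx : ∀ a, #{i | x i = a} = c a)
    (f : κ → M) : ∏ i, f (x i) = ∏ a, f a ^ c a := by
  simp only [← Finset.prod_fiberwise' univ x f, prod_const, hx]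

lemma renyiSum_pi_of_card_fiber {ι X Y : Type*} [Fintype ι] [DecidableEq ι] [Fintype X]
    [DecidableEq X] [Fintype Y] (α : ℝ) {W : X → Y → ℝ} (hW : ∀ a y, 0 ≤ W a y) {σ : Y → ℝ}
    (hσ : ∀ y, 0 ≤ σ y) {x : ι → X} {c : X → ℕ} (hx : ∀ a, #{i | x i = a} = c a) :
    renyiSum α (fun y : ι → Y => ∏ i, W (x i) (y i)) (fun y => ∏ i, σ (y i))
      = ∏ a, renyiSum α (W a) σ ^ c a := by
  rw [renyiSum_pi α _ _ (fun i => hW (x i)) (fun _ => hσ),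
    prod_comp_eq_prod_pow_of_card_fiber hx (fun a => renyiSum α (W a) σ)]

lemma sum_rpow_le_card_rpow_mul_rpow_sum {ι : Type*} (s : Finset ι) {β : ℝ} (hβ0 : 0 < β)
    (hβ1 : β ≤ 1) {f : ι → ℝ} (hf : ∀ i, 0 ≤ f i) :
    ∑ i ∈ s, f i ^ β ≤ (#s : ℝ) ^ (1 - β) * (∑ i ∈ s, f i) ^ β := by
  have := inner_le_weight_mul_Lp_of_nonneg s (p := β⁻¹) (one_le_inv₀ hβ0 |>.mpr hβ1) (fun _ => 1)
    (fun i => f i ^ β) (fun _ => zero_le_one) fun i => rpow_nonneg (hf i) _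
  simpa [inv_inv, rpow_rpow_inv (hf _) hβ0.ne'] using this

lemma sum_sum_le_sum_of_pairwise_disjoint {ι Z : Type*} [Fintype Z] (s : Finset ι)
    {D : ι → Finset Z} (hD : Pairwise (Disjoint on D)) {f : Z → ℝ} (hf : ∀ z, 0 ≤ f z) :
    ∑ m ∈ s, ∑ z ∈ D m, f z ≤ ∑ z, f z := by
  classical
  rw [← sum_biUnion (hD.set_pairwise _)]
  exact sum_le_univ_sum_of_nonneg hf

lemma average_success_le_rpow_mul_rpow {Z : Type*} [Fintype Z] {M : ℕ} (hM : 0 < M) {α R : ℝ}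
    (hα : 1 < α) {P : Fin M → Z → ℝ} (hP : ∀ m z, 0 ≤ P m z) {q : Z → ℝ} (hq : ∀ z, 0 < q z)
    (hq1 : ∑ z, q z ≤ 1) (hPR : ∀ m, renyiSum α (P m) q ≤ R) {D : Fin M → Finset Z}
    (hD : Pairwise (Disjoint on D)) :
    (1 / M) * ∑ m, ∑ z ∈ D m, P m z ≤ (M : ℝ) ^ (α⁻¹ - 1) * R ^ α⁻¹ := by
  have hq0 : ∀ z, 0 ≤ q z := fun z => (hq z).le
  have hα0 : 0 < α⁻¹ := inv_pos.mpr (by linarith)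
  have hα1 : α⁻¹ < 1 := inv_lt_one_of_one_lt₀ hα
  have hrenyi0 : ∀ m, 0 ≤ renyiSum α (P m) q := fun m => renyiSum_nonneg (hP m) hq0
  have hR0 : 0 ≤ R := (hrenyi0 ⟨0, hM⟩).trans (hPR _)
  have hmass : (∑ m, ∑ z ∈ D m, q z) ^ (1 - α⁻¹) ≤ 1 :=
    rpow_le_one (sum_nonneg fun m _ => sum_nonneg fun z _ => hq0 z)
      ((sum_sum_le_sum_of_pairwise_disjoint univ hD hq0).trans hq1) (by linarith)
  have hcard := sum_rpow_le_card_rpow_mul_rpow_sum univ (f := fun m => ∑ z ∈ D m, q z)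
    (sub_pos.mpr hα1) (by linarith) fun m => sum_nonneg fun z _ => hq0 z
  rw [card_univ, Fintype.card_fin, sub_sub_cancel] at hcard
  calc (1 / M) * ∑ m, ∑ z ∈ D m, P m z
      ≤ (1 / M) * ∑ m, (∑ z ∈ D m, q z) ^ (1 - α⁻¹) * R ^ α⁻¹ := by
        gcongr with m
        exact (sum_le_rpow_mul_renyiSum_rpow (D m) hα.le (hP m) hq).trans <|
          mul_le_mul_of_nonneg_left (rpow_le_rpow (hrenyi0 m) (hPR m) hα0.le)
            (rpow_nonneg (sum_nonneg fun z _ => hq0 z) _)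
    _ = (1 / M) * (∑ m, (∑ z ∈ D m, q z) ^ (1 - α⁻¹)) * R ^ α⁻¹ := by rw [← sum_mul, mul_assoc]
    _ ≤ (1 / M) * ((M : ℝ) ^ α⁻¹ * 1) * R ^ α⁻¹ := 
        mul_le_mul_of_nonneg_right (mul_le_mul_of_nonneg_left
          (hcard.trans (mul_le_mul_of_nonneg_left hmass (by positivity))) (by positivity))
          (rpow_nonneg hR0 _)
    _ = (M : ℝ) ^ (α⁻¹ - 1) * R ^ α⁻¹ := by
        rw [rpow_sub_one (by positivity)]
        ring

theorem stmt_17_general {X Y : Type*} [Fintype X] [Fintype Y] [DecidableEq X]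
    (n : ℕ)
    (W : X → Y → ℝ) (hW0 : ∀ x y, 0 ≤ W x y) (hW1 : ∀ x, ∑ y, W x y = 1)
    (c : X → ℕ)
    (M : ℕ) (hM : 0 < M)
    (E : Fin M → Fin n → X)
    (hE : ∀ m a, ((Finset.univ : Finset (Fin n)).filter (fun i => E m i = a)).card = c a)
    (D : Fin M → Finset (Fin n → Y))
    (hD : ∀ m m', m ≠ m' → Disjoint (D m) (D m'))
    (σ : Y → ℝ) (hσ : ∀ y, 0 < σ y) (hσ1 : ∑ y, σ y = 1)
    (α : ℝ) (hα : 1 < α) :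
    let succ : ℝ := (1 / M) * ∑ m, ∑ y ∈ D m, ∏ i, W (E m i) (y i)
    0 < succ →
    ((1 - α) / α) * ((∑ a, ((c a : ℝ) / n) *
          ((1 / (α - 1)) * Real.log (∑ y, W a y ^ α * σ y ^ (1 - α))))
        - Real.log M / n)
      ≤ -(1 / n) * Real.log succ := by
  intro succ hsucc
  set R := ∏ a, renyiSum α (W a) σ ^ c a
  have hrenyi : ∀ a, 0 < renyiSum α (W a) σ := fun a =>
    renyiSum_pos (hW0 a) (by rw [hW1]; exact one_pos) hσ
  have hR : 0 < R := prod_pos fun a _ => pow_pos (hrenyi a) _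
  have hsucc_le : succ ≤ (M : ℝ) ^ (α⁻¹ - 1) * R ^ α⁻¹ :=
    average_success_le_rpow_mul_rpow hM hα (fun m y => prod_nonneg fun i _ => hW0 _ _)
      (fun y : Fin n → Y => prod_pos fun i _ => hσ (y i))
      (by rw [← Fintype.sum_pow, hσ1, one_pow])
      (fun m => (renyiSum_pi_of_card_fiber α hW0 (fun y => (hσ y).le) (hE m)).le) hD
  have hsum : (∑ a, ((c a : ℝ) / n) * ((1 / (α - 1)) * Real.log (∑ y, W a y ^ α * σ y ^ (1 - α))))
      = (n : ℝ)⁻¹ * (α - 1)⁻¹ * Real.log R := by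
    rw [log_prod fun a _ => (pow_pos (hrenyi a) _).ne', mul_sum]
    exact sum_congr rfl fun a _ => by rw [log_pow, renyiSum]; ring
  have hα1 : α - 1 ≠ 0 := by linarith
  have hα0 : α ≠ 0 := by linarith
  rw [hsum]
  calc (1 - α) / α * ((n : ℝ)⁻¹ * (α - 1)⁻¹ * Real.log R - Real.log M / n)
      = (n : ℝ)⁻¹ * -((α⁻¹ - 1) * Real.log M + α⁻¹ * Real.log R) := by
        field_simp
        ring
    _ = (n : ℝ)⁻¹ * -Real.log ((M : ℝ) ^ (α⁻¹ - 1) * R ^ α⁻¹) := by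
        rw [log_mul (by positivity) (by positivity), log_rpow (by positivity), log_rpow hR]
    _ ≤ (n : ℝ)⁻¹ * -Real.log succ := by gcongr
    _ = -(1 / n) * Real.log succ := by ring

/-- Strong converse for channel codes with constant composition (classical version): for a
channel `W`, a constant-composition code with all codewords of type `P` (`P a = c a / n`),
`M` messages and disjoint decision regions `D m`, for every `α > 1` and distribution `σ`,
`-(1/n) log(1 - P_e) ≥ ((1-α)/α)[∑_x P(x) D_α(W(·|x)‖σ) - (log M)/n]`,
where `1 - P_e` is the average success probability (assumed positive so that the logarithm
is the real one). -/
theorem stmt_17 {X Y : Type*} [Fintype X] [Fintype Y] [DecidableEq X]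
    (n : ℕ) (hn : 0 < n)
    (W : X → Y → ℝ) (hW0 : ∀ x y, 0 ≤ W x y) (hW1 : ∀ x, ∑ y, W x y = 1)
    (c : X → ℕ) (hc : ∑ a, c a = n)
    (M : ℕ) (hM : 0 < M)
    (E : Fin M → Fin n → X)
    (hE : ∀ m a, ((Finset.univ : Finset (Fin n)).filter (fun i => E m i = a)).card = c a)
    (D : Fin M → Finset (Fin n → Y))
    (hD : ∀ m m', m ≠ m' → Disjoint (D m) (D m'))
    (σ : Y → ℝ) (hσ : ∀ y, 0 < σ y) (hσ1 : ∑ y, σ y = 1)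
    (α : ℝ) (hα : 1 < α) :
    let succ : ℝ := (1 / M) * ∑ m, ∑ y ∈ D m, ∏ i, W (E m i) (y i)
    0 < succ →
    ((1 - α) / α) * ((∑ a, ((c a : ℝ) / n) *
          ((1 / (α - 1)) * Real.log (∑ y, W a y ^ α * σ y ^ (1 - α))))
        - Real.log M / n)
      ≤ -(1 / n) * Real.log succ :=
  stmt_17_general n W hW0 hW1 c M hM E hE D hD σ hσ hσ1 α hα
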